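/- arXiv:2401.02058 — 3 statements merged into one kernel-verified Lean document; each statement's English description precedes it below -/
import Mathlib

section
/- Fix K ≥ 2, λ_W, λ_H > 0, N > 0, n_k > 0, and define g(x) = (n_k/N)·log(1 + (K-1)·exp(-√(K/(K-1))·√(λ_H/λ_W)·√(n_k)·x)) + λ_H·n_k·x for x ≥ 0. If (N/√(n_k))·√(λ_W·λ_H) < √((K-1)/K), then g has a unique minimizer on [0,∞) at x* = √((K-1)/K · λ_W/λ_H · 1/n_k)·log((K-1)·(√(n_k)/(N·√((K-1)/K·λ_W·λ_H)) - 1)) > 0. -/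
/-!
With `u y = m * exp (-(a * y))`, the derivative of `c * log (1 + u y) + b * y` factors as
`(c * a - b) * (u y₀ - u y) / (1 + u y)`, where `y₀` is the point with `u y₀ = b / (c * a - b)`.
As `u` is strictly decreasing and `b < c * a`, the objective strictly decreases up to `y₀` and
strictly increases after it. The theorem is the case `a = √(K/(K-1)) √(λ_H/λ_W) √n_k`,
`b = λ_H n_k`, `c = n_k / N`, `m = K - 1`; squaring shows that the hypothesis on `N` says
`K / (K - 1) < c * a / b`, which is exactly `0 < y₀`.
-/

open Real Set

noncomputable def reducedObjective (a b c m y : ℝ) : ℝ :=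
  c * log (1 + m * exp (-(a * y))) + b * y

noncomputable def reducedObjectiveArgmin (a b c m : ℝ) : ℝ :=
  log (m * (c * a / b - 1)) / a

section ReducedObjective

variable {a b c m : ℝ}

theorem hasDerivAt_reducedObjective (hm : 0 ≤ m) (y : ℝ) :
    HasDerivAt (reducedObjective a b c m)
      (b - c * a * (m * exp (-(a * y))) / (1 + m * exp (-(a * y)))) y := by
  have hpos : 0 < 1 + m * exp (-(a * y)) := by positivity
  have hinner : HasDerivAt (fun y => 1 + m * exp (-(a * y))) (m * (exp (-(a * y)) * -a)) y :=
    ((((hasDerivAt_id y).const_mul a).neg.exp).const_mul m).const_add 1 |>.congr_deriv (by simp)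
  refine (((hinner.log hpos.ne').const_mul c).add ((hasDerivAt_id' y).const_mul b)).congr_deriv ?_
  field_simp
  ring

theorem mul_exp_neg_mul_reducedObjectiveArgmin (ha : a ≠ 0) (hm : 0 < m) (hb : 0 < b)
    (hbca : b < c * a) :
    m * exp (-(a * reducedObjectiveArgmin a b c m)) = b / (c * a - b) := by
  have hca : 0 < c * a - b := sub_pos.2 hbca
  have hL : 0 < m * (c * a / b - 1) := mul_pos hm (by rw [sub_pos, one_lt_div hb]; exact hbca)
  rw [reducedObjectiveArgmin, mul_div_cancel₀ _ ha, exp_neg, exp_log hL]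
  field_simp

theorem strictAnti_mul_exp_neg_mul (ha : 0 < a) (hm : 0 < m) :
    StrictAnti fun y => m * exp (-(a * y)) := fun _ _ hxy =>
  mul_lt_mul_of_pos_left (exp_lt_exp.2 (neg_lt_neg (mul_lt_mul_of_pos_left hxy ha))) hm

theorem hasDerivAt_reducedObjective_of_argmin (ha : 0 < a) (hm : 0 < m) (hb : 0 < b)
    (hbca : b < c * a) (y : ℝ) :
    HasDerivAt (reducedObjective a b c m)
      ((c * a - b) * (m * exp (-(a * reducedObjectiveArgmin a b c m)) - m * exp (-(a * y))) /
        (1 + m * exp (-(a * y)))) y := by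
  rw [mul_exp_neg_mul_reducedObjectiveArgmin ha.ne' hm hb hbca]
  have hca : c * a - b ≠ 0 := (sub_pos.2 hbca).ne'
  have hpos : 0 < 1 + m * exp (-(a * y)) := by positivity
  refine (hasDerivAt_reducedObjective hm.le y).congr_deriv ?_
  field_simp
  ring

theorem strictMonoOn_reducedObjective (ha : 0 < a) (hm : 0 < m) (hb : 0 < b)
    (hbca : b < c * a) :
    StrictMonoOn (reducedObjective a b c m) (Ici (reducedObjectiveArgmin a b c m)) := by
  have hderiv := hasDerivAt_reducedObjective_of_argmin ha hm hb hbca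
  refine strictMonoOn_of_deriv_pos (convex_Ici _)
    (fun y _ => (hderiv y).continuousAt.continuousWithinAt) fun y hy => ?_
  rw [interior_Ici] at hy
  rw [(hderiv y).deriv]
  exact div_pos (mul_pos (sub_pos.2 hbca) (sub_pos.2 (strictAnti_mul_exp_neg_mul ha hm hy)))
    (by positivity)

theorem strictAntiOn_reducedObjective (ha : 0 < a) (hm : 0 < m) (hb : 0 < b)
    (hbca : b < c * a) :
    StrictAntiOn (reducedObjective a b c m) (Iic (reducedObjectiveArgmin a b c m)) := by
  have hderiv := hasDerivAt_reducedObjective_of_argmin ha hm hb hbca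
  refine strictAntiOn_of_deriv_neg (convex_Iic _)
    (fun y _ => (hderiv y).continuousAt.continuousWithinAt) fun y hy => ?_
  rw [interior_Iic] at hy
  rw [(hderiv y).deriv]
  exact div_neg_of_neg_of_pos
    (mul_neg_of_pos_of_neg (sub_pos.2 hbca) (sub_neg.2 (strictAnti_mul_exp_neg_mul ha hm hy)))
    (by positivity)

theorem reducedObjective_argmin_lt (ha : 0 < a) (hm : 0 < m) (hb : 0 < b) (hbca : b < c * a)
    {y : ℝ} (hy : y ≠ reducedObjectiveArgmin a b c m) :
    reducedObjective a b c m (reducedObjectiveArgmin a b c m) < reducedObjective a b c m y := by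
  rcases hy.lt_or_gt with hlt | hgt
  · exact strictAntiOn_reducedObjective ha hm hb hbca (mem_Iic.2 hlt.le) (mem_Iic.2 le_rfl) hlt
  · exact strictMonoOn_reducedObjective ha hm hb hbca (mem_Ici.2 le_rfl) (mem_Ici.2 hgt.le) hgt

end ReducedObjective

section Parameters

variable {κ lW lH N nk : ℝ}

theorem sqrt_div_mul_div_mul_one_div_eq_inv (hκ : 1 < κ) (hlW : 0 < lW) (hlH : 0 < lH) :
    √((κ - 1) / κ * (lW / lH) * (1 / nk)) = (√(κ / (κ - 1)) * √(lH / lW) * √nk)⁻¹ := by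
  have hκ' : 0 ≤ κ / (κ - 1) := div_nonneg (by linarith) (by linarith)
  rw [← inv_div κ, ← inv_div lH, one_div, ← mul_inv, ← mul_inv, sqrt_inv,
    sqrt_mul (mul_nonneg hκ' (div_nonneg hlH.le hlW.le)), sqrt_mul hκ']

theorem sqrt_div_mul_sqrt_eq_div_mul_div (hκ : 1 < κ) (hlW : 0 < lW) (hlH : 0 < lH)
    (hN : 0 < N) (hnk : 0 < nk) :
    √nk / (N * √((κ - 1) / κ * (lW * lH))) =
      nk / N * (√(κ / (κ - 1)) * √(lH / lW) * √nk) / (lH * nk) := by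
  have hκ0 : 0 < κ - 1 := by linarith
  rw [← sq_eq_sq₀ (by positivity) (by positivity)]
  simp only [div_pow, mul_pow, sq_sqrt hnk.le,
    sq_sqrt (by positivity : 0 ≤ (κ - 1) / κ * (lW * lH)),
    sq_sqrt (by positivity : 0 ≤ κ / (κ - 1)), sq_sqrt (by positivity : 0 ≤ lH / lW)]
  field_simp

theorem div_sub_one_lt_sqrt_div_mul_sqrt (hκ : 1 < κ) (hlW : 0 < lW) (hlH : 0 < lH)
    (hN : 0 < N) (hnk : 0 < nk) (h : N / √nk * √(lW * lH) < √((κ - 1) / κ)) :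
    κ / (κ - 1) < √nk / (N * √((κ - 1) / κ * (lW * lH))) := by
  have hκ0 : 0 < κ - 1 := by linarith
  rw [← sq_lt_sq₀ (by positivity) (by positivity)] at h ⊢
  simp only [div_pow, mul_pow, sq_sqrt hnk.le,
    sq_sqrt (by positivity : 0 ≤ (κ - 1) / κ * (lW * lH)),
    sq_sqrt (by positivity : 0 ≤ (κ - 1) / κ), sq_sqrt (by positivity : 0 ≤ lW * lH)] at h ⊢
  field_simp at h ⊢
  exact h

end Parameters

theorem stmt_13 (K : ℕ) (hK : 2 ≤ K) (lW lH N nk : ℝ)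
    (hlW : 0 < lW) (hlH : 0 < lH) (hN : 0 < N) (hnk : 0 < nk)
    (g : ℝ → ℝ)
    (hg : ∀ x, g x = (nk / N) * Real.log (1 + ((K : ℝ) - 1) *
        Real.exp (-(Real.sqrt ((K : ℝ) / ((K : ℝ) - 1)) * Real.sqrt (lH / lW)
          * Real.sqrt nk * x))) + lH * nk * x)
    (hcond : (N / Real.sqrt nk) * Real.sqrt (lW * lH) < Real.sqrt (((K : ℝ) - 1) / (K : ℝ)))
    (xstar : ℝ)
    (hx : xstar = Real.sqrt (((K : ℝ) - 1) / (K : ℝ) * (lW / lH) * (1 / nk)) *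
        Real.log (((K : ℝ) - 1) *
          (Real.sqrt nk / (N * Real.sqrt (((K : ℝ) - 1) / (K : ℝ) * (lW * lH))) - 1))) :
    0 < xstar ∧ (∀ x, 0 ≤ x → g xstar ≤ g x) ∧
      (∀ x, 0 ≤ x → x ≠ xstar → g xstar < g x) := by
  have hκ : (1 : ℝ) < K := by exact_mod_cast hK
  have hκ0 : (0 : ℝ) < K - 1 := by linarith
  set a := √((K : ℝ) / ((K : ℝ) - 1)) * √(lH / lW) * √nk
  have ha : 0 < a := by positivity
  have hratio := sqrt_div_mul_sqrt_eq_div_mul_div hκ hlW hlH hN hnk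
  have hgap : (K : ℝ) / (K - 1) < nk / N * a / (lH * nk) :=
    hratio ▸ div_sub_one_lt_sqrt_div_mul_sqrt hκ hlW hlH hN hnk hcond
  have hbca : lH * nk < nk / N * a :=
    (one_lt_div (by positivity)).1 (((one_lt_div hκ0).2 (by linarith)).trans hgap)
  obtain rfl : g = reducedObjective a (lH * nk) (nk / N) (K - 1) := funext hg
  obtain rfl : xstar = reducedObjectiveArgmin a (lH * nk) (nk / N) (K - 1) := by
    rw [hx, sqrt_div_mul_div_mul_one_div_eq_inv hκ hlW hlH, hratio, inv_mul_eq_div,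
      reducedObjectiveArgmin]
  have hmin : ∀ x, x ≠ reducedObjectiveArgmin a (lH * nk) (nk / N) (K - 1) → _ := fun x hne =>
    reducedObjective_argmin_lt ha hκ0 (by positivity) hbca hne
  refine ⟨div_pos (log_pos ?_) ha, fun x _ => ?_, fun x _ hne => hmin x hne⟩
  · calc (1 : ℝ) = (K - 1) * (K / (K - 1) - 1) := by field_simp; ring
      _ < (K - 1) * (nk / N * a / (lH * nk) - 1) := by gcongr
  · rcases eq_or_ne x (reducedObjectiveArgmin a (lH * nk) (nk / N) (K - 1)) with rfl | hne
    exacts [le_rfl, (hmin x hne).le]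
end

section
/- With g as above, if (N/√(n_k))·√(λ_W·λ_H) ≥ √((K-1)/K), then g'(x) > 0 for all x > 0, and hence g is minimized over [0,∞) uniquely at x = 0. -/
/-!
Write `g x = A log (1 + a e^{-cx}) + B x` with `A = n_k/N`, `a = K - 1`, `c` the rate in the
exponent and `B = λ_H n_k`. Then `g' x = B - A c · a e^{-cx} / (1 + a e^{-cx})`, and since
`t ↦ t / (1 + t)` is increasing, for `x > 0` the subtracted term is strictly below its value
`A c (K - 1) / K` at `x = 0`. The threshold condition says precisely that this value is at most `B`,
so `g' > 0` on `(0, ∞)` and `g` is strictly increasing on `[0, ∞)`.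
-/

open Real Set

noncomputable def collapseObjective (A a c B x : ℝ) : ℝ :=
  A * log (1 + a * exp (-(c * x))) + B * x

section CollapseObjective

variable {A a c B : ℝ}

theorem hasDerivAt_collapseObjective (ha : 0 ≤ a) (x : ℝ) :
    HasDerivAt (collapseObjective A a c B)
      (B - A * c * (a * exp (-(c * x)) / (1 + a * exp (-(c * x))))) x := by
  have hexp : HasDerivAt (fun y => 1 + a * exp (-(c * y))) (a * (exp (-(c * x)) * -c)) x := by
    simpa using (((hasDerivAt_id x).const_mul c).neg.exp.const_mul a).const_add 1
  have hlog := (hexp.log (by positivity)).const_mul A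
  exact (hlog.add ((hasDerivAt_id' x).const_mul B)).congr_deriv (by ring)

theorem div_one_add_mul_lt_div_one_add {e : ℝ} (ha : 0 < a) (he : 0 ≤ e) (he1 : e < 1) :
    a * e / (1 + a * e) < a / (1 + a) := by
  rw [div_lt_div_iff₀ (by positivity) (by positivity)]
  nlinarith

theorem deriv_collapseObjective_pos (hA : 0 < A) (ha : 0 < a) (hc : 0 < c)
    (hB : A * c * (a / (1 + a)) ≤ B) {x : ℝ} (hx : 0 < x) :
    0 < deriv (collapseObjective A a c B) x := by
  rw [(hasDerivAt_collapseObjective ha.le x).deriv, sub_pos]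
  have he1 : exp (-(c * x)) < 1 := exp_lt_one_iff.mpr (by nlinarith)
  calc A * c * (a * exp (-(c * x)) / (1 + a * exp (-(c * x))))
      < A * c * (a / (1 + a)) := by
        have := div_one_add_mul_lt_div_one_add ha (exp_pos _).le he1
        gcongr
    _ ≤ B := hB

theorem strictMonoOn_collapseObjective (hA : 0 < A) (ha : 0 < a) (hc : 0 < c)
    (hB : A * c * (a / (1 + a)) ≤ B) :
    StrictMonoOn (collapseObjective A a c B) (Ici 0) := by
  refine strictMonoOn_of_deriv_pos (convex_Ici 0) (fun x _ => ?_) (fun x hx => ?_)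
  · exact (hasDerivAt_collapseObjective ha.le x).continuousAt.continuousWithinAt
  · rw [interior_Ici] at hx
    exact deriv_collapseObjective_pos hA ha hc hB hx

end CollapseObjective

theorem collapse_rate_mul_le {K lW lH N nk : ℝ} (hlW : 0 < lW) (hlH : 0 < lH) (hnk : 0 < nk)
    (hcond : √((K - 1) / K) ≤ (N / √nk) * √(lW * lH)) :
    √(K / (K - 1)) * √(lH / lW) * √nk * ((K - 1) / K) ≤ lH * N := by
  have hsqrt_inv : √(K / (K - 1)) * ((K - 1) / K) = √((K - 1) / K) := by
    rw [← inv_div, sqrt_inv, ← div_eq_inv_mul, div_sqrt]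
  have hlH_sqrt : √(lW * lH) * √(lH / lW) = lH := by
    rw [← sqrt_mul (by positivity), show lW * lH * (lH / lW) = lH ^ 2 by field_simp,
      sqrt_sq hlH.le]
  calc √(K / (K - 1)) * √(lH / lW) * √nk * ((K - 1) / K)
      = √((K - 1) / K) * √(lH / lW) * √nk := by rw [← hsqrt_inv]; ring
    _ ≤ (N / √nk) * √(lW * lH) * √(lH / lW) * √nk := by gcongr
    _ = lH * N := by
        rw [mul_assoc (N / √nk), hlH_sqrt]
        field_simp [(sqrt_pos.mpr hnk).ne']

theorem stmt_14 (K : ℕ) (hK : 2 ≤ K) (lW lH N nk : ℝ)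
    (hlW : 0 < lW) (hlH : 0 < lH) (hN : 0 < N) (hnk : 0 < nk)
    (g : ℝ → ℝ)
    (hg : ∀ x, g x = (nk / N) * Real.log (1 + ((K : ℝ) - 1) *
        Real.exp (-(Real.sqrt ((K : ℝ) / ((K : ℝ) - 1)) * Real.sqrt (lH / lW)
          * Real.sqrt nk * x))) + lH * nk * x)
    (hcond : Real.sqrt (((K : ℝ) - 1) / (K : ℝ)) ≤ (N / Real.sqrt nk) * Real.sqrt (lW * lH)) :
    (∀ x, 0 < x → 0 < deriv g x) ∧ (∀ x, 0 < x → g 0 < g x) := by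
  have ha : (0 : ℝ) < K - 1 := by
    have : (2 : ℝ) ≤ K := by exact_mod_cast hK
    linarith
  set c := √((K : ℝ) / (K - 1)) * √(lH / lW) * √nk
  have hc : 0 < c := by positivity
  have hg' : g = collapseObjective (nk / N) ((K : ℝ) - 1) c (lH * nk) := funext hg
  have hB : nk / N * c * (((K : ℝ) - 1) / (1 + ((K : ℝ) - 1))) ≤ lH * nk := by
    have := collapse_rate_mul_le hlW hlH hnk hcond
    rw [add_sub_cancel]
    calc nk / N * c * (((K : ℝ) - 1) / K) = nk / N * (c * (((K : ℝ) - 1) / K)) := by ring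
      _ ≤ nk / N * (lH * N) := by gcongr
      _ = lH * nk := by field_simp
  have hA : 0 < nk / N := by positivity
  rw [hg']
  exact ⟨fun x hx => deriv_collapseObjective_pos hA ha hc hB hx,
    fun x hx => strictMonoOn_collapseObjective hA ha hc hB self_mem_Ici hx.le hx⟩
end

section
/- Let L₁(W,H) = g(W·H̄·D) + (λ_W/2)‖W‖_F² + (λ_H/2)·Σ_k n_k‖h_k‖² be a differentiable function of W ∈ ℝ^{K×d} and class-means h_1,...,h_K ∈ ℝ^d (H̄ the class-mean matrix), where g depends on W and H̄ only through the product. At any critical point (∇_W L₁ = 0 and ∇_{H̄} L₁ = 0), one has λ_W·‖W‖_F² = λ_H·Σ_{k=1}^K n_k‖h_k‖². -/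
/-!
Multiply the stationarity condition for `W` by `Wᵀ` on the left, and the one for `H̄` by `H̄ᵀ`
on the right. Both products contain the same term `Wᵀ G H̄ᵀ` up to associativity, so taking
traces gives `λ_W tr(WᵀW) = λ_H tr(H̄ D H̄ᵀ)`, which are the two weighted squared norms.
-/

open Matrix

namespace Matrix

variable {R : Type*} {l m n : Type*} [Fintype l] [Fintype m] [Fintype n]

theorem trace_transpose_mul_self [CommSemiring R] (A : Matrix m n R) :
    trace (Aᵀ * A) = ∑ i, ∑ j, A i j ^ 2 := by
  simp only [trace, diag, mul_apply, transpose_apply, sq]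
  exact Finset.sum_comm

theorem trace_mul_diagonal_mul_transpose [CommSemiring R] [DecidableEq n]
    (A : Matrix m n R) (c : n → R) :
    trace (A * diagonal c * Aᵀ) = ∑ k, c k * ∑ i, A i k ^ 2 := by
  simp only [trace, diag, mul_apply (M := A * diagonal c), mul_diagonal, transpose_apply,
    Finset.mul_sum, sq]
  rw [Finset.sum_comm]
  exact Finset.sum_congr rfl fun _ _ => Finset.sum_congr rfl fun _ _ => by ring

/-- The balance identity at a critical point of `g(W H) + (a/2)‖W‖² + (b/2) tr(H D Hᵀ)`,
where `G` is the gradient of `g` at the product `W H`. -/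
theorem trace_balance_of_critical [CommRing R] (a b : R) (W : Matrix l m R)
    (H : Matrix m n R) (G : Matrix l n R) (D : Matrix n n R)
    (hW : G * Hᵀ + a • W = 0) (hH : Wᵀ * G + b • (H * D) = 0) :
    a * trace (Wᵀ * W) = b * trace (H * D * Hᵀ) := by
  have hGH : G * Hᵀ = -(a • W) := eq_neg_of_add_eq_zero_left hW
  have hWG : Wᵀ * G = -(b • (H * D)) := eq_neg_of_add_eq_zero_left hH
  have hcross : trace (Wᵀ * (G * Hᵀ)) = trace (Wᵀ * G * Hᵀ) := by rw [Matrix.mul_assoc]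
  rw [hGH, hWG, Matrix.mul_neg, Matrix.neg_mul, trace_neg, trace_neg, Matrix.mul_smul,
    Matrix.smul_mul, trace_smul, trace_smul, smul_eq_mul, smul_eq_mul] at hcross
  exact neg_injective hcross

end Matrix

theorem stmt_17_general (K d : ℕ) (lW lH : ℝ)
    (n : Fin K → ℝ)
    (W : Matrix (Fin K) (Fin d) ℝ) (Hb : Matrix (Fin d) (Fin K) ℝ)
    (G : Matrix (Fin K) (Fin K) ℝ)
    (hW : G * Hb.transpose + lW • W = 0)
    (hH : W.transpose * G + lH • (Hb * Matrix.diagonal n) = 0) :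
    lW * (∑ i, ∑ j, (W i j) ^ 2) = lH * ∑ k, n k * ∑ i, (Hb i k) ^ 2 := by
  rw [← trace_transpose_mul_self, ← trace_mul_diagonal_mul_transpose]
  exact trace_balance_of_critical lW lH W Hb G (diagonal n) hW hH

/-- At a critical point of `L₁(W, H̄) = g(W * H̄) + (λ_W/2)‖W‖_F² + (λ_H/2)∑ₖ n_k‖h_k‖²`,
where `G` is the gradient of `g` with respect to the product `Z = W * H̄`, the two
stationarity conditions give `λ_W ‖W‖_F² = λ_H ∑ₖ n_k ‖h_k‖²`. -/
theorem stmt_17 (K d : ℕ) (lW lH : ℝ) (hlW : 0 < lW) (hlH : 0 < lH)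
    (n : Fin K → ℝ) (hn : ∀ k, 0 < n k)
    (W : Matrix (Fin K) (Fin d) ℝ) (Hb : Matrix (Fin d) (Fin K) ℝ)
    (G : Matrix (Fin K) (Fin K) ℝ)
    (hW : G * Hb.transpose + lW • W = 0)
    (hH : W.transpose * G + lH • (Hb * Matrix.diagonal n) = 0) :
    lW * (∑ i, ∑ j, (W i j) ^ 2) = lH * ∑ k, n k * ∑ i, (Hb i k) ^ 2 :=
  stmt_17_general K d lW lH n W Hb G hW hH
end
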